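/- (Quantitative negativity of the virial functional below the mountain-pass level, bi-harmonic Hartree case.) Let N ≥ 5, 0 < α < N, τ > 0 with 0 < 2τ < min{N + α, 4(1 + α/N)}, and 1 + α/N < p < 1 + (4 − 2τ + α)/(N−4); set B := (Np − N − α + 2τ)/2 and assume B > 2. For smooth compactly supported u : ℝ^N → ℂ define I[u] := ‖Δu‖² − (B/(2p)) P[u] and S[u] := ‖Δu‖² + ‖u‖² − (1/p) P[u], and let m := inf { S[v] : v smooth compactly supported, v ≠ 0, I[v] = 0 }. Then for every smooth compactly supported u ≠ 0 with I[u] < 0 one has I[u] ≤ −(B/2)(m − S[u]). -/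

import Mathlib

open MeasureTheory

/-- The Laplacian of a function on `ℝ^N`. -/
noncomputable def lap {N : ℕ} {E : Type*} [NormedAddCommGroup E] [NormedSpace ℝ E]
    (u : EuclideanSpace ℝ (Fin N) → E) (x : EuclideanSpace ℝ (Fin N)) : E :=
  ∑ i, fderiv ℝ (fun y => fderiv ℝ u y (EuclideanSpace.single i 1)) x
    (EuclideanSpace.single i 1)

/-- The squared `L²` norm of the Laplacian, `‖Δu‖²`. -/
noncomputable def biKinetic {N : ℕ} (u : EuclideanSpace ℝ (Fin N) → ℂ) : ℝ :=
  ∫ x, ‖lap u x‖ ^ 2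

/-- The normalizing constant `c_{N,α}` of the Riesz potential. -/
noncomputable def rieszConst (N : ℕ) (α : ℝ) : ℝ :=
  Real.Gamma (((N : ℝ) - α) / 2) /
    (Real.Gamma (α / 2) * Real.pi ^ ((N : ℝ) / 2) * (2 : ℝ) ^ α)

/-- Convolution `J_α ∗ g` of the Riesz potential with a real-valued function. -/
noncomputable def rieszConvR {N : ℕ} (α : ℝ) (g : EuclideanSpace ℝ (Fin N) → ℝ)
    (x : EuclideanSpace ℝ (Fin N)) : ℝ :=
  ∫ y, rieszConst N α * ‖x - y‖ ^ (α - (N : ℝ)) * g y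

/-- The Hartree-type potential energy. -/
noncomputable def hartreeP {N : ℕ} (α τ p : ℝ) (u : EuclideanSpace ℝ (Fin N) → ℂ) : ℝ :=
  ∫ x, ‖x‖ ^ (-τ) * rieszConvR α (fun y => ‖y‖ ^ (-τ) * ‖u y‖ ^ p) x * ‖u x‖ ^ p

/-- The bi-harmonic virial functional `I[u] := ‖Δu‖² − (B/(2p)) P[u]`. -/
noncomputable def virialI2 {N : ℕ} (α τ p B : ℝ)
    (u : EuclideanSpace ℝ (Fin N) → ℂ) : ℝ :=
  biKinetic u - (B / (2 * p)) * hartreeP α τ p u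

/-- The bi-harmonic action `S[u] := ‖Δu‖² + ‖u‖² − (1/p) P[u]`. -/
noncomputable def actionS2 {N : ℕ} (α τ p : ℝ)
    (u : EuclideanSpace ℝ (Fin N) → ℂ) : ℝ :=
  biKinetic u + (∫ x, ‖u x‖ ^ 2) - (1 / p) * hartreeP α τ p u

/-- The bi-harmonic mountain-pass level. -/
noncomputable def mpLevel2 (N : ℕ) (α τ p B : ℝ) : ℝ :=
  sInf {s : ℝ | ∃ v : EuclideanSpace ℝ (Fin N) → ℂ,
    ContDiff ℝ (⊤ : ℕ∞) v ∧ HasCompactSupport v ∧ v ≠ 0 ∧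
    virialI2 α τ p B v = 0 ∧ s = actionS2 α τ p v}

open MeasureTheory FourierTransform Real Complex
open scoped RealInnerProductSpace
set_option maxHeartbeats 1000000

lemma fderiv_apply_comm {N : ℕ} {u : EuclideanSpace ℝ (Fin N) → ℂ}
    (hu : ContDiff ℝ (⊤ : ℕ∞) u) (x v w : EuclideanSpace ℝ (Fin N)) :
    fderiv ℝ (fun y => fderiv ℝ u y v) x w = fderiv ℝ (fderiv ℝ u) x w v := by
  have hdu : ContDiff ℝ (⊤ : ℕ∞) (fderiv ℝ u) := hu.fderiv_right (by simp)
  have h1 : (fun y => fderiv ℝ u y v)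
      = (ContinuousLinearMap.apply ℝ ℂ v) ∘ (fderiv ℝ u) := rfl
  rw [h1, fderiv_comp x (ContinuousLinearMap.apply ℝ ℂ v).differentiableAt
    (hdu.differentiable (by simp) x), ContinuousLinearMap.fderiv]
  rfl

lemma lap_eq_sum {N : ℕ} {u : EuclideanSpace ℝ (Fin N) → ℂ}
    (hu : ContDiff ℝ (⊤ : ℕ∞) u) (x : EuclideanSpace ℝ (Fin N)) :
    lap u x = ∑ i, iteratedFDeriv ℝ 2 u x (fun _ => EuclideanSpace.single i 1) := by
  unfold lap
  refine Finset.sum_congr rfl fun i _ => ?_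
  rw [fderiv_apply_comm hu, iteratedFDeriv_two_apply]

lemma eq_zero_of_lap_eq_zero {N : ℕ} (hN : 1 ≤ N) {u : EuclideanSpace ℝ (Fin N) → ℂ}
    (hu : ContDiff ℝ (⊤ : ℕ∞) u) (hc : HasCompactSupport u)
    (hlap : ∀ x, lap u x = 0) : u = 0 := by
  haveI : Nontrivial (EuclideanSpace ℝ (Fin N)) := by
    refine ⟨0, EuclideanSpace.single ⟨0, by omega⟩ 1, fun h => ?_⟩
    have := congrArg (fun v => v ⟨0, by omega⟩) h.symm
    simp [EuclideanSpace.single_apply] at this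
  have hInt : ∀ n : ℕ, Integrable (iteratedFDeriv ℝ n u) := fun n =>
    (hu.continuous_iteratedFDeriv (by exact_mod_cast le_top)).integrable_of_hasCompactSupport (hc.iteratedFDeriv n)
  have hu_int : Integrable u := hu.continuous.integrable_of_hasCompactSupport hc
  have h2 := Real.fourier_iteratedFDeriv (N := (⊤ : ℕ∞)) (hu.of_le (by simp))
    (fun n _ => hInt n) (le_top : ((2:ℕ) : ℕ∞) ≤ ⊤)
  have hTcont : Continuous (iteratedFDeriv ℝ 2 u) := hu.continuous_iteratedFDeriv (WithTop.coe_le_coe.2 le_top)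
  have hgInt : ∀ i : Fin N, Integrable
      (fun x => iteratedFDeriv ℝ 2 u x (fun _ => EuclideanSpace.single i 1)) := by
    intro i
    have hsupp := HasCompactSupport.comp_left (f := iteratedFDeriv ℝ 2 u)
      (g := fun T' => T' (fun _ => EuclideanSpace.single i 1)) (hc.iteratedFDeriv 2) (by simp)
    exact Continuous.integrable_of_hasCompactSupport
      ((continuous_eval_const _).comp hTcont) hsupp
  have key : ∀ w : EuclideanSpace ℝ (Fin N), w ≠ 0 → 𝓕 u w = 0 := by
    intro w hw
    have hAi : ∀ i : Fin N,
        𝓕 (fun x => iteratedFDeriv ℝ 2 u x (fun _ => EuclideanSpace.single i 1)) w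
          = (-(2 * π * I)) ^ 2 •
            (∏ _j : Fin 2, (-innerSL ℝ) w (EuclideanSpace.single i 1)) • 𝓕 u w := by
      intro i
      rw [← Real.fourier_continuousMultilinearMap_apply (hInt 2)]
      rw [show 𝓕 (iteratedFDeriv ℝ 2 u) w
        = VectorFourier.fourierPowSMulRight (-innerSL ℝ) (𝓕 u) w 2 from congrFun h2 w]
      rw [VectorFourier.fourierPowSMulRight_apply]
    have hsum : ∑ i : Fin N,
        𝓕 (fun x => iteratedFDeriv ℝ 2 u x (fun _ => EuclideanSpace.single i 1)) w
        = 0 := by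
      have heq : ∀ i : Fin N,
          𝓕 (fun x => iteratedFDeriv ℝ 2 u x (fun _ => EuclideanSpace.single i 1)) w
          = ∫ x, 𝐞 (-⟪x, w⟫) •
              iteratedFDeriv ℝ 2 u x (fun _ => EuclideanSpace.single i 1) := fun i =>
        Real.fourier_eq _ _
      rw [Finset.sum_congr rfl fun i _ => heq i, ← integral_finset_sum]
      · have hz : ∀ x, (∑ i : Fin N, 𝐞 (-⟪x, w⟫) •
            iteratedFDeriv ℝ 2 u x (fun _ => EuclideanSpace.single i 1)) = 0 := by
          intro x
          rw [← Finset.smul_sum, ← lap_eq_sum hu x, hlap x, smul_zero]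
        simp only [hz, integral_zero]
      · intro i _
        exact ((Real.fourierIntegral_convergent_iff w).2 (hgInt i))
    rw [Finset.sum_congr rfl fun i _ => hAi i] at hsum
    have hsum2 : (∑ i, (∏ _j : Fin 2, (-innerSL ℝ) w (EuclideanSpace.single i 1))) •
        ((-(2 * π * I)) ^ 2 • 𝓕 u w) = 0 := by
      rw [Finset.sum_smul, ← hsum]
      exact Finset.sum_congr rfl fun i _ => smul_comm _ _ _
    have hcoef : (0:ℝ) < ∑ i, (∏ _j : Fin 2, (-innerSL ℝ) w (EuclideanSpace.single i 1)) := by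
      have h0 : ∀ i, (∏ _j : Fin 2, (-innerSL ℝ) w (EuclideanSpace.single i 1))
          = w i * w i := by
        intro i
        simp [EuclideanSpace.inner_single_right, Fin.prod_univ_two]
        ring
      rw [Finset.sum_congr rfl fun i _ => h0 i]
      have h1 : (∑ i, w i * w i) = ⟪w, w⟫ := by
        rw [PiLp.inner_apply]; simp [RCLike.inner_apply, sq]
      rw [h1, real_inner_self_eq_norm_sq]
      exact pow_pos (norm_pos_iff.mpr hw) 2
    have hz2 : (-(2 * π * I)) ^ 2 ≠ 0 := by
      apply pow_ne_zero
      simp [Real.pi_ne_zero, Complex.I_ne_zero]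
    rcases smul_eq_zero.1 hsum2 with h | h
    · exact absurd h (ne_of_gt hcoef)
    rcases smul_eq_zero.1 h with h' | h'
    · exact absurd h' hz2
    · exact h'
  have hFcont : Continuous (𝓕 u) :=
    VectorFourier.fourierIntegral_continuous Real.continuous_fourierChar
      (by exact continuous_inner) hu_int
  have hF0 : 𝓕 u = 0 := by
    refine Continuous.ext_on (dense_compl_singleton (0 : EuclideanSpace ℝ (Fin N)))
      hFcont continuous_const fun w hw => key w hw
  have hinv := hu.continuous.fourierInv_fourier_eq hu_int
    (by rw [hF0]; exact integrable_zero _ _ _)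
  rw [hF0] at hinv
  rw [← hinv]
  funext w
  simp [Real.fourierInv_eq]

lemma vnb_biKinetic_pos {N : ℕ} {u : EuclideanSpace ℝ (Fin N) → ℂ} (hN : 1 ≤ N)
    (hu : ContDiff ℝ (⊤ : ℕ∞) u) (hc : HasCompactSupport u) (hne : u ≠ 0) :
    0 < ∫ x, ‖lap u x‖ ^ 2 := by
  have hTcont : Continuous (iteratedFDeriv ℝ 2 u) := hu.continuous_iteratedFDeriv (WithTop.coe_le_coe.2 le_top)
  have hlap_eq : lap u
      = fun x => ∑ i, iteratedFDeriv ℝ 2 u x (fun _ => EuclideanSpace.single i 1) :=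
    funext (lap_eq_sum hu)
  have heval : ∀ i : Fin N, Continuous
      fun x => iteratedFDeriv ℝ 2 u x (fun _ => EuclideanSpace.single i 1) :=
    fun i => (continuous_eval_const _).comp hTcont
  have hlapc : Continuous (lap u) := by
    rw [hlap_eq]
    exact continuous_finset_sum _ fun i _ => heval i
  have hlapsupp : HasCompactSupport (lap u) := by
    rw [hlap_eq]
    refine (hc.iteratedFDeriv (𝕜 := ℝ) 2).mono ?_
    intro x hx
    simp only [Function.mem_support] at hx ⊢
    intro h0
    apply hx
    rw [h0]
    simp
  have hInt2 : Integrable (fun x => ‖lap u x‖ ^ 2) := by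
    refine Continuous.integrable_of_hasCompactSupport (hlapc.norm.pow 2) (hlapsupp.mono ?_)
    intro x hx
    simp only [Function.mem_support] at hx ⊢
    intro h0
    apply hx
    rw [h0]
    simp
  have hK0 : 0 ≤ ∫ x, ‖lap u x‖ ^ 2 := integral_nonneg fun x => by positivity
  rcases hK0.lt_or_eq with h | h
  · exact h
  exfalso
  have hae := (integral_eq_zero_iff_of_nonneg (fun x => by positivity) hInt2).1 h.symm
  have hfun : (fun x => ‖lap u x‖ ^ 2) = 0 :=
    (Continuous.ae_eq_iff_eq volume (hlapc.norm.pow 2) continuous_const).1 hae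
  refine hne (eq_zero_of_lap_eq_zero hN hu hc fun x => ?_)
  have h2 : ‖lap u x‖ ^ 2 = 0 := by simpa using congrFun hfun x
  exact norm_eq_zero.1 ((pow_eq_zero_iff two_ne_zero).1 h2)

section AuxV
variable {N : ℕ} {u : EuclideanSpace ℝ (Fin N) → ℂ}

lemma vnb_lap_smul (hu : ContDiff ℝ (⊤ : ℕ∞) u) (c : ℂ) (x : EuclideanSpace ℝ (Fin N)) :
    lap (fun y => c • u y) x = c • lap u x := by
  unfold lap
  rw [Finset.smul_sum]
  refine Finset.sum_congr rfl fun i _ => ?_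
  have hdu : ContDiff ℝ (⊤ : ℕ∞) (fderiv ℝ u) := hu.fderiv_right (by simp)
  have h1 : (fun y => fderiv ℝ (fun z => c • u z) y (EuclideanSpace.single i 1))
      = fun y => c • fderiv ℝ u y (EuclideanSpace.single i 1) := by
    funext y
    rw [fderiv_fun_const_smul (hu.differentiable (by simp) y) c]
    rfl
  rw [h1, fderiv_fun_const_smul ?_ c]
  · rfl
  · exact ((ContinuousLinearMap.apply ℝ ℂ (EuclideanSpace.single i 1)).differentiable.comp
      (hdu.differentiable (by simp))) x

lemma vnb_biKinetic_smul (hu : ContDiff ℝ (⊤ : ℕ∞) u) {t : ℝ} (ht : 0 ≤ t) :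
    biKinetic (fun x => (t : ℂ) • u x) = t ^ 2 * biKinetic u := by
  unfold biKinetic
  have h : (fun x => ‖lap (fun y => (t : ℂ) • u y) x‖ ^ 2)
      = fun x => t ^ 2 * ‖lap u x‖ ^ 2 := by
    funext x
    rw [vnb_lap_smul hu, norm_smul, Complex.norm_real, Real.norm_eq_abs, _root_.abs_of_nonneg ht,
      mul_pow]
  rw [h, integral_const_mul]

lemma vnb_mass_smul (t : ℝ) (ht : 0 ≤ t) :
    (∫ x, ‖(t : ℂ) • u x‖ ^ 2) = t ^ 2 * ∫ x, ‖u x‖ ^ 2 := by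
  have h : (fun x => ‖(t : ℂ) • u x‖ ^ 2) = fun x => t ^ 2 * ‖u x‖ ^ 2 := by
    funext x
    rw [norm_smul, Complex.norm_real, Real.norm_eq_abs, _root_.abs_of_nonneg ht, mul_pow]
  rw [h, integral_const_mul]

lemma vnb_hartreeP_smul (α τ p : ℝ) {t : ℝ} (ht : 0 < t) :
    hartreeP α τ p (fun x => (t : ℂ) • u x) = t ^ (2 * p) * hartreeP α τ p u := by
  unfold hartreeP
  have hnorm : ∀ y, ‖(t : ℂ) • u y‖ ^ p = t ^ p * ‖u y‖ ^ p := fun y => by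
    rw [norm_smul, Complex.norm_real, Real.norm_eq_abs, _root_.abs_of_pos ht,
      Real.mul_rpow ht.le (norm_nonneg _)]
  have hconv : ∀ x, rieszConvR α (fun y => ‖y‖ ^ (-τ) * ‖(t : ℂ) • u y‖ ^ p) x
      = t ^ p * rieszConvR α (fun y => ‖y‖ ^ (-τ) * ‖u y‖ ^ p) x := by
    intro x
    unfold rieszConvR
    rw [← integral_const_mul]
    congr 1; funext y
    simp only []
    show rieszConst N α * ‖x - y‖ ^ (α - (N:ℝ)) * (‖y‖ ^ (-τ) * ‖(t:ℂ) • u y‖ ^ p) = t ^ p * (rieszConst N α * ‖x - y‖ ^ (α - (N:ℝ)) * (‖y‖ ^ (-τ) * ‖u y‖ ^ p))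
    rw [hnorm y]; ring
  have htt : t ^ p * t ^ p = t ^ (2 * p) := by
    rw [← Real.rpow_add ht]; ring_nf
  have h2 : (fun x => ‖x‖ ^ (-τ) *
        rieszConvR α (fun y => ‖y‖ ^ (-τ) * ‖(t : ℂ) • u y‖ ^ p) x * ‖(t : ℂ) • u x‖ ^ p)
      = fun x => t ^ (2 * p) *
        (‖x‖ ^ (-τ) * rieszConvR α (fun y => ‖y‖ ^ (-τ) * ‖u y‖ ^ p) x * ‖u x‖ ^ p) := by
    funext x
    rw [hconv x, hnorm x, ← htt]; ring
  rw [h2, integral_const_mul]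

end AuxV

set_option maxHeartbeats 1000000 in
/-- **Quantitative negativity of the virial functional below the mountain-pass level,
bi-harmonic Hartree case.** -/
theorem virial_negativity_biharmonic (N : ℕ) (hN : 5 ≤ N) (α τ p B : ℝ)
    (hα : 0 < α) (hαN : α < N) (hτ : 0 < 2 * τ)
    (hτ1 : 2 * τ < N + α) (hτ2 : 2 * τ < 4 * (1 + α / N))
    (hp1 : 1 + α / N < p) (hp2 : p < 1 + (4 - 2 * τ + α) / ((N : ℝ) - 4))
    (hB : B = (N * p - N - α + 2 * τ) / 2) (hB2 : 2 < B)
    (u : EuclideanSpace ℝ (Fin N) → ℂ)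
    (hu : ContDiff ℝ (⊤ : ℕ∞) u) (hc : HasCompactSupport u) (hne : u ≠ 0)
    (hI : virialI2 α τ p B u < 0) :
    virialI2 α τ p B u ≤ -(B / 2) * (mpLevel2 N α τ p B - actionS2 α τ p u) := by
  have hN1 : 1 ≤ N := by omega
  have hN0 : (0:ℝ) < (N:ℝ) := by exact_mod_cast Nat.pos_of_ne_zero (by omega)
  have hα0 : 0 < α / N := div_pos hα hN0
  have hp1' : (1:ℝ) < p := by linarith
  have hp0 : (0:ℝ) < p := by linarith
  have hB0 : (0:ℝ) < B := by linarith
  have hK : 0 < biKinetic u := vnb_biKinetic_pos hN1 hu hc hne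
  have hM : 0 ≤ ∫ x, ‖u x‖ ^ 2 := integral_nonneg fun x => by positivity
  have hcoef : 0 < B / (2 * p) := by positivity
  have hIu : virialI2 α τ p B u = biKinetic u - B / (2 * p) * hartreeP α τ p u := rfl
  have hKP : biKinetic u < B / (2 * p) * hartreeP α τ p u := by rw [hIu] at hI; linarith
  have hCP : 0 < B / (2 * p) * hartreeP α τ p u := hK.trans hKP
  have he : (0:ℝ) < 2 * p - 2 := by linarith
  set r : ℝ := biKinetic u / (B / (2 * p) * hartreeP α τ p u) with hr_def
  have hr0 : 0 < r := div_pos hK hCP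
  have hr1 : r < 1 := (div_lt_one hCP).2 hKP
  set t : ℝ := r ^ (1 / (2 * p - 2)) with ht_def
  have ht0 : 0 < t := Real.rpow_pos_of_pos hr0 _
  have ht1 : t < 1 := Real.rpow_lt_one hr0.le hr1 (by positivity)
  have hte : t ^ (2 * p - 2) = r := by
    rw [ht_def, ← Real.rpow_mul hr0.le, one_div_mul_cancel (ne_of_gt he), Real.rpow_one]
  have hKv : biKinetic (fun x => (t:ℂ) • u x) = t ^ 2 * biKinetic u :=
    vnb_biKinetic_smul hu ht0.le
  have hMv : (∫ x, ‖(t:ℂ) • u x‖ ^ 2) = t ^ 2 * ∫ x, ‖u x‖ ^ 2 := vnb_mass_smul t ht0.le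
  have hPv : hartreeP α τ p (fun x => (t:ℂ) • u x) = t ^ (2*p) * hartreeP α τ p u :=
    vnb_hartreeP_smul α τ p ht0
  have ht2p : t ^ (2*p) = t ^ 2 * t ^ (2*p-2) := by
    rw [← Real.rpow_natCast t 2, ← Real.rpow_add ht0]
    norm_num
  have hP0 : 0 < hartreeP α τ p u := by
    rcases mul_pos_iff.1 hCP with ⟨_, h⟩ | ⟨h1, _⟩
    · exact h
    · exact absurd hcoef (not_lt.2 h1.le)
  have hKey : B / (2*p) * (t ^ (2*p-2) * hartreeP α τ p u) = biKinetic u := by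
    rw [hte, hr_def]
    field_simp
  have hIv : virialI2 α τ p B (fun x => (t:ℂ) • u x) = 0 := by
    show biKinetic (fun x => (t:ℂ) • u x)
      - B / (2*p) * hartreeP α τ p (fun x => (t:ℂ) • u x) = 0
    rw [hKv, hPv, ht2p]
    have hstep : B / (2*p) * (t ^ 2 * t ^ (2*p-2) * hartreeP α τ p u)
        = t ^ 2 * biKinetic u := by
      rw [show t ^ 2 * t ^ (2*p-2) * hartreeP α τ p u
        = t ^ 2 * (t ^ (2*p-2) * hartreeP α τ p u) from by ring, ← hKey]
      ring
    rw [hstep]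
    exact sub_self _
  have hvSmooth : ContDiff ℝ (⊤ : ℕ∞) (fun x => (t:ℂ) • u x) := hu.const_smul _
  have hvSupp : HasCompactSupport (fun x => (t:ℂ) • u x) := by
    refine hc.mono ?_
    intro x hx
    simp only [Function.mem_support] at hx ⊢
    intro h0
    apply hx
    rw [h0, smul_zero]
  have hvne : (fun x => (t:ℂ) • u x) ≠ 0 := by
    intro h
    apply hne
    funext x
    have h2 : (t:ℂ) • u x = 0 := congrFun h x
    rcases smul_eq_zero.1 h2 with h' | h'
    · exact absurd h' (Complex.ofReal_ne_zero.mpr ht0.ne')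
    · exact h'
  have hmem : actionS2 α τ p (fun x => (t:ℂ) • u x) ∈ {s : ℝ |
      ∃ v : EuclideanSpace ℝ (Fin N) → ℂ, ContDiff ℝ (⊤ : ℕ∞) v ∧ HasCompactSupport v ∧ v ≠ 0 ∧
        virialI2 α τ p B v = 0 ∧ s = actionS2 α τ p v} :=
    ⟨_, hvSmooth, hvSupp, hvne, hIv, rfl⟩
  have hbdd : BddBelow {s : ℝ |
      ∃ v : EuclideanSpace ℝ (Fin N) → ℂ, ContDiff ℝ (⊤ : ℕ∞) v ∧ HasCompactSupport v ∧ v ≠ 0 ∧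
        virialI2 α τ p B v = 0 ∧ s = actionS2 α τ p v} := by
    refine ⟨0, fun s hs => ?_⟩
    obtain ⟨w, _, _, _, hw4, rfl⟩ := hs
    have hKw : 0 ≤ biKinetic w := integral_nonneg fun x => by positivity
    have hMw : 0 ≤ ∫ x, ‖w x‖ ^ 2 := integral_nonneg fun x => by positivity
    have hw4' : biKinetic w - B / (2*p) * hartreeP α τ p w = 0 := hw4
    have hPw : B * hartreeP α τ p w = 2 * p * biKinetic w := by
      field_simp at hw4'
      linarith
    have hS : actionS2 α τ p w
        = biKinetic w + (∫ x, ‖w x‖ ^ 2) - 1/p * hartreeP α τ p w := rfl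
    have hPw2 : 1/p * hartreeP α τ p w = 2 / B * biKinetic w := by
      field_simp
      linarith [hPw]
    rw [hS, hPw2]
    have h2B : 2 / B < 1 := by rw [div_lt_one hB0]; linarith
    nlinarith
  have hm_le : mpLevel2 N α τ p B ≤ actionS2 α τ p (fun x => (t:ℂ) • u x) :=
    csInf_le hbdd hmem
  have hSv : actionS2 α τ p (fun x => (t:ℂ) • u x)
      = t ^ 2 * ((1 - 2/B) * biKinetic u + ∫ x, ‖u x‖ ^ 2) := by
    show biKinetic (fun x => (t:ℂ) • u x) + (∫ x, ‖(t:ℂ) • u x‖ ^ 2)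
      - 1/p * hartreeP α τ p (fun x => (t:ℂ) • u x) = _
    rw [hKv, hMv, hPv, ht2p]
    have h2 : 1/p * (t ^ (2*p-2) * hartreeP α τ p u) = 2/B * biKinetic u := by
      rw [← hKey]
      field_simp
    have h3 : 1/p * (t ^ 2 * t ^ (2*p-2) * hartreeP α τ p u)
        = t ^ 2 * (2/B * biKinetic u) := by
      calc 1/p * (t ^ 2 * t ^ (2*p-2) * hartreeP α τ p u)
          = t ^ 2 * (1/p * (t ^ (2*p-2) * hartreeP α τ p u)) := by ring
        _ = t ^ 2 * (2/B * biKinetic u) := by rw [h2]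
    rw [h3]
    ring
  have hpos : 0 ≤ (1 - 2/B) * biKinetic u + ∫ x, ‖u x‖ ^ 2 := by
    have h2B : 2 / B < 1 := by rw [div_lt_one hB0]; linarith
    nlinarith
  have ht2le : t ^ 2 ≤ 1 := by nlinarith
  have hfin1 : actionS2 α τ p (fun x => (t:ℂ) • u x)
      ≤ (1 - 2/B) * biKinetic u + ∫ x, ‖u x‖ ^ 2 := by
    rw [hSv]
    nlinarith
  have hfin2 : (1 - 2/B) * biKinetic u + (∫ x, ‖u x‖ ^ 2)
      = actionS2 α τ p u - 2/B * virialI2 α τ p B u := by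
    show _ = (biKinetic u + (∫ x, ‖u x‖ ^ 2) - 1/p * hartreeP α τ p u)
      - 2/B * (biKinetic u - B / (2*p) * hartreeP α τ p u)
    have h4 : 2/B * (B / (2*p) * hartreeP α τ p u) = 1/p * hartreeP α τ p u := by
      field_simp
    have h5 : 2/B * (biKinetic u - B / (2*p) * hartreeP α τ p u)
        = 2/B * biKinetic u - 1/p * hartreeP α τ p u := by
      rw [mul_sub, h4]
    rw [h5]
    field_simp
    ring
  have hm2 : mpLevel2 N α τ p B ≤ actionS2 α τ p u - 2/B * virialI2 α τ p B u := by
    linarith [hm_le, hfin1, hfin2.symm.le, hfin2.le]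
  have hmul := mul_le_mul_of_nonneg_left hm2 (by positivity : (0:ℝ) ≤ B / 2)
  have hsimp : B / 2 * (actionS2 α τ p u - 2/B * virialI2 α τ p B u)
      = B / 2 * actionS2 α τ p u - virialI2 α τ p B u := by
    field_simp
  rw [hsimp] at hmul
  nlinarith [hmul]
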